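/- For all natural numbers γ and m with m ≥ 2γ + 1, one has the identity ω_m²·C_{γγγγ} − 2·ω_γ²·C_{γγmm} = ω_γ·(ω_m² − 2·ω_γ²), and this quantity satisfies ω_m²·C_{γγγγ} − 2·ω_γ²·C_{γγmm} ≥ 2·ω_γ³ ≥ 2; in particular it is strictly positive. -/

import Mathlib

/-!
Substituting `y = cos x` turns `C_{γγmm}` into `(2/π) ∫₀^π (U_γ(cos x) sin((m+1)x))² dx`.
For `b > γ`, the product `U_γ(cos x) sin(bx)` equals `∑_{j=0}^{γ} sin((b-γ+2j)x)`, a sum of `γ+1`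
sines with distinct positive frequencies, so by their orthogonality on `[0, π]` the integral is
`(γ+1)π/2`. Hence `C_{γγmm} = γ+1` for every `m ≥ γ`, and the claims reduce to arithmetic in
`γ` and `m`, using `m + 1 ≥ 2(γ + 1)`.
-/

open MeasureTheory

/-- Chebyshev polynomials of the second kind, as real-valued functions. -/
noncomputable def chebU : ℕ → ℝ → ℝ
  | 0, _ => 1
  | 1, y => 2 * y
  | n + 2, y => 2 * y * chebU (n + 1) y - chebU n y

/-- Fourier coefficients of the cubic conformal wave equation on the Einstein cylinder
in spherical symmetry. -/
noncomputable def Ccoef (i j k m : ℕ) : ℝ :=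
  (2 / Real.pi) *
    ∫ y in (-1:ℝ)..1, chebU i y * chebU j y * chebU k y * chebU m y * Real.sqrt (1 - y ^ 2)

open Real Finset Polynomial.Chebyshev

theorem chebU_eq_eval_U : (n : ℕ) → (y : ℝ) → chebU n y = (U ℝ n).eval y
  | 0, y => by simp [chebU]
  | 1, y => by simp [chebU]
  | n + 2, y => by
      rw [chebU, chebU_eq_eval_U (n + 1), chebU_eq_eval_U n]
      push_cast
      simp [U_add_two]

@[fun_prop]
theorem continuous_chebU (n : ℕ) : Continuous (chebU n) := by
  simpa only [funext (chebU_eq_eval_U n)] using (U ℝ n).continuous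

theorem chebU_cos_mul_sin (n : ℕ) (θ : ℝ) :
    chebU n (cos θ) * sin θ = sin ((n + 1) * θ) := by
  simp [chebU_eq_eval_U]

theorem chebU_cos_mul_sin_eq_sum (b θ : ℝ) : (n : ℕ) →
    chebU n (cos θ) * sin (b * θ) = ∑ j ∈ range (n + 1), sin ((b - n + 2 * j) * θ)
  | 0 => by simp [chebU]
  | 1 => by
      rw [sum_range_succ, sum_range_one, chebU, mul_comm 2, mul_assoc, mul_comm,
        two_mul_sin_mul_cos]
      push_cast
      ring_nf
  | n + 2 => by
      set g : ℕ → ℝ := fun j => sin ((b - (n + 2 : ℕ) + 2 * j) * θ)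
      have hcos (j : ℕ) : 2 * cos θ * sin ((b - (n + 1 : ℕ) + 2 * j) * θ) = g j + g (j + 1) := by
        rw [mul_comm 2, mul_assoc, mul_comm, two_mul_sin_mul_cos]
        simp only [g]
        push_cast
        ring_nf
      have hshift (j : ℕ) : sin ((b - n + 2 * j) * θ) = g (j + 1) := by
        simp only [g]
        push_cast
        ring_nf
      rw [chebU, sub_mul, mul_assoc, chebU_cos_mul_sin_eq_sum b θ (n + 1),
        chebU_cos_mul_sin_eq_sum b θ n, mul_sum]
      simp only [hcos, hshift, sum_add_distrib]
      rw [sum_range_succ g (n + 2), sum_range_succ (fun j => g (j + 1)) (n + 1)]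
      ring

theorem integral_cos_int_mul (k : ℤ) :
    ∫ x in (0:ℝ)..π, cos (k * x) = if k = 0 then π else 0 := by
  split_ifs with hk
  · simp [hk]
  · rw [intervalIntegral.integral_comp_mul_left _ (Int.cast_ne_zero.mpr hk)]
    simp [integral_cos, sin_int_mul_pi]

theorem integral_sin_nat_mul_mul_sin_nat_mul {p : ℕ} (hp : p ≠ 0) (q : ℕ) :
    ∫ x in (0:ℝ)..π, sin (p * x) * sin (q * x) = if p = q then π / 2 else 0 := by
  have hprod (x : ℝ) : sin (p * x) * sin (q * x) =
      (cos (((p - q : ℤ) : ℝ) * x) - cos (((p + q : ℤ) : ℝ) * x)) / 2 := by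
    push_cast
    rw [sub_mul, add_mul, ← two_mul_sin_mul_sin]
    ring
  have hint (k : ℤ) : IntervalIntegrable (fun x => cos (k * x)) volume 0 π :=
    Continuous.intervalIntegrable (by fun_prop) _ _
  simp only [hprod]
  rw [intervalIntegral.integral_div, intervalIntegral.integral_sub (hint _) (hint _),
    integral_cos_int_mul, integral_cos_int_mul, if_neg (show (p + q : ℤ) ≠ 0 by omega)]
  simp only [sub_eq_zero, Nat.cast_inj]
  split_ifs <;> ring

theorem integral_sq_sum_sin_nat_mul (s : Finset ℕ) (hs : 0 ∉ s) :
    ∫ x in (0:ℝ)..π, (∑ k ∈ s, sin (k * x)) ^ 2 = #s * π / 2 := by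
  have hint (k l : ℕ) : IntervalIntegrable (fun x => sin (k * x) * sin (l * x)) volume 0 π :=
    Continuous.intervalIntegrable (by fun_prop) _ _
  have hrow (k : ℕ) (hk : k ∈ s) :
      ∫ x in (0:ℝ)..π, ∑ l ∈ s, sin (k * x) * sin (l * x) = π / 2 := by
    rw [intervalIntegral.integral_finsetSum fun l _ => hint k l]
    simp only [integral_sin_nat_mul_mul_sin_nat_mul (ne_of_mem_of_not_mem hk hs), sum_ite_eq,
      if_pos hk]
  simp only [sq, sum_mul_sum]
  rw [intervalIntegral.integral_finsetSum fun k _ =>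
      Continuous.intervalIntegrable (by fun_prop) _ _,
    sum_congr rfl hrow, sum_const, nsmul_eq_mul]
  ring

theorem integral_sin_mul_comp_cos (g : ℝ → ℝ) (hg : Continuous g) :
    ∫ y in (-1:ℝ)..1, g y = ∫ x in (0:ℝ)..π, sin x * g (cos x) := by
  have h := intervalIntegral.integral_comp_mul_deriv (a := π) (b := 0)
    (fun x _ => hasDerivAt_cos x) continuous_sin.neg.continuousOn hg
  rw [cos_pi, cos_zero] at h
  rw [← h, intervalIntegral.integral_symm, ← intervalIntegral.integral_neg]
  simp [mul_comm]

theorem integral_sq_chebU_cos_mul_sin {n b : ℕ} (h : n < b) :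
    ∫ x in (0:ℝ)..π, (chebU n (cos x) * sin (b * x)) ^ 2 = (n + 1) * π / 2 := by
  set freq : ℕ → ℕ := fun j => b - n + 2 * j
  have hfreq : Function.Injective freq := fun i j hij => by simp only [freq] at hij; omega
  have hsum (x : ℝ) :
      chebU n (cos x) * sin (b * x) = ∑ k ∈ (range (n + 1)).image freq, sin (k * x) := by
    rw [chebU_cos_mul_sin_eq_sum, sum_image hfreq.injOn]
    refine sum_congr rfl fun j _ => ?_
    push_cast [freq, Nat.cast_sub h.le]
    ring_nf
  simp only [hsum]
  rw [integral_sq_sum_sin_nat_mul _ (by simp [freq]; omega), card_image_of_injective _ hfreq,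
    card_range]
  push_cast
  ring

theorem Ccoef_self_self_of_le {n m : ℕ} (h : n ≤ m) : Ccoef n n m m = n + 1 := by
  have hsub : ∀ x ∈ Set.uIcc 0 π,
      sin x * (chebU n (cos x) * chebU n (cos x) * chebU m (cos x) * chebU m (cos x) *
        √(1 - cos x ^ 2)) = (chebU n (cos x) * sin ((m + 1 : ℕ) * x)) ^ 2 := by
    intro x hx
    rw [Set.uIcc_of_le pi_pos.le] at hx
    rw [← sin_sq, sqrt_sq (sin_nonneg_of_mem_Icc hx), Nat.cast_succ, ← chebU_cos_mul_sin]
    ring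
  rw [Ccoef, integral_sin_mul_comp_cos _ (by fun_prop), intervalIntegral.integral_congr hsub,
    integral_sq_chebU_cos_mul_sin (by omega)]
  field_simp

/-- Non-degeneracy quantity for `m ≥ 2γ + 1`: closed formula and positive lower bound. -/
theorem nondegeneracy_quantity_CW (γ m : ℕ) (h : 2 * γ + 1 ≤ m) :
    ((m:ℝ) + 1) ^ 2 * Ccoef γ γ γ γ - 2 * ((γ:ℝ) + 1) ^ 2 * Ccoef γ γ m m =
        ((γ:ℝ) + 1) * (((m:ℝ) + 1) ^ 2 - 2 * ((γ:ℝ) + 1) ^ 2) ∧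
      ((m:ℝ) + 1) ^ 2 * Ccoef γ γ γ γ - 2 * ((γ:ℝ) + 1) ^ 2 * Ccoef γ γ m m ≥
        2 * ((γ:ℝ) + 1) ^ 3 ∧
      2 * ((γ:ℝ) + 1) ^ 3 ≥ 2 ∧
      0 < ((m:ℝ) + 1) ^ 2 * Ccoef γ γ γ γ - 2 * ((γ:ℝ) + 1) ^ 2 * Ccoef γ γ m m := by
  have hQ : ((m:ℝ) + 1) ^ 2 * (γ + 1) - 2 * ((γ:ℝ) + 1) ^ 2 * (γ + 1) =
      ((γ:ℝ) + 1) * (((m:ℝ) + 1) ^ 2 - 2 * ((γ:ℝ) + 1) ^ 2) := by ring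
  rw [Ccoef_self_self_of_le le_rfl, Ccoef_self_self_of_le (by omega), hQ]
  have hm : 2 * ((γ:ℝ) + 1) ≤ m + 1 := by exact_mod_cast (by omega : 2 * (γ + 1) ≤ m + 1)
  have hlower : 2 * ((γ:ℝ) + 1) ^ 3 ≤ ((γ:ℝ) + 1) * (((m:ℝ) + 1) ^ 2 - 2 * ((γ:ℝ) + 1) ^ 2) :=
    calc 2 * ((γ:ℝ) + 1) ^ 3 = ((γ:ℝ) + 1) * ((2 * ((γ:ℝ) + 1)) ^ 2 - 2 * ((γ:ℝ) + 1) ^ 2) := by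
          ring
      _ ≤ _ := by gcongr
  have hone : 2 ≤ 2 * ((γ:ℝ) + 1) ^ 3 := by
    linarith [one_le_pow₀ (n := 3) (by simp : (1:ℝ) ≤ γ + 1)]
  exact ⟨rfl, hlower, hone, by linarith⟩
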